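/- arXiv:1701.04746 — 2 statements merged into one kernel-verified Lean document; each statement's English description precedes it below -/
import Mathlib

section
/- For N = 2^n, applying the bit-reversal permutation B_N to any row of G_N yields another row of G_N; specifically, B_N applied entrywise to the positions of row i of G_N gives row B_N(i) of G_N. -/
def G2 : Matrix (Fin 2) (Fin 2) (ZMod 2) := !![1,0;1,1]

def Gmat : (n : ℕ) → Matrix (Fin (2^n)) (Fin (2^n)) (ZMod 2)
  | 0 => 1
  | n+1 =>
    Matrix.reindex (finProdFinEquiv.trans (finCongr (by rw [pow_succ, Nat.mul_comm])))
      (finProdFinEquiv.trans (finCongr (by rw [pow_succ, Nat.mul_comm])))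
      (Matrix.kroneckerMap (· * ·) G2 (Gmat n))

def bitRev : ℕ → ℕ → ℕ
  | 0, _ => 0
  | n+1, i => 2^n * (i % 2) + bitRev n (i / 2)

theorem bitRev_lt (n i : ℕ) : bitRev n i < 2^n := by
  induction n generalizing i with
  | zero => simp [bitRev]
  | succ n ih =>
    have h1 : i % 2 < 2 := Nat.mod_lt _ (by norm_num)
    have h2 := ih (i / 2)
    have h3 : 2^n * (i % 2) ≤ 2^n := by
      calc 2^n * (i % 2) ≤ 2^n * 1 := Nat.mul_le_mul_left _ (by omega)
        _ = 2^n := by omega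
    have h4 : 2^(n+1) = 2^n * 2 := pow_succ 2 n
    simp only [bitRev]
    omega

def bitRevFin (n : ℕ) (i : Fin (2^n)) : Fin (2^n) := ⟨bitRev n i.val, bitRev_lt n i.val⟩

def bitRevVec (n : ℕ) (P : Fin (2^n) → Bool) : Fin (2^n) → Bool :=
  fun i => P (bitRevFin n i)

def elemPerm (j k i : ℕ) : ℕ :=
  if i < k ∨ k + 2^(j+1) ≤ i then i
  else if i < k + 2^j then i + 2^j
  else i - 2^j

def elemPermVec (n j k : ℕ) (P : Fin (2^n) → Bool) : Fin (2^n) → Bool :=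
  fun i => P ⟨elemPerm j k i.val % 2^n, Nat.mod_lt _ (Nat.two_pow_pos n)⟩

def ElemValid (n j k : ℕ) : Prop := j + 1 ≤ n ∧ 2^(j+1) ∣ k ∧ k < 2^n

def wt {m : ℕ} (P : Fin m → Bool) : ℕ := (Finset.univ.filter fun i => P i = true).card

def IsRowUnion (n : ℕ) (P : Fin (2^n) → Bool) : Prop :=
  ∃ L : Finset (Fin (2^n)), L.Nonempty ∧ ∀ j, P j = true ↔ ∃ i ∈ L, Gmat n i j = 1

def blockLt (n j k : ℕ) (P : Fin (2^n) → Bool) : Prop :=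
  ∃ t < 2^j,
    (∀ s < t, P ⟨(k+s) % 2^n, Nat.mod_lt _ (Nat.two_pow_pos n)⟩
              = P ⟨(k+2^j+s) % 2^n, Nat.mod_lt _ (Nat.two_pow_pos n)⟩) ∧
    P ⟨(k+t) % 2^n, Nat.mod_lt _ (Nat.two_pow_pos n)⟩ = false ∧
    P ⟨(k+2^j+t) % 2^n, Nat.mod_lt _ (Nat.two_pow_pos n)⟩ = true

instance (n j k : ℕ) (P : Fin (2^n) → Bool) : Decidable (blockLt n j k P) := by
  unfold blockLt; infer_instance

def algPhi (n : ℕ) (P : Fin (2^n) → Bool) : Fin (2^n) → Bool :=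
  (List.range n).foldl (fun Q j =>
    (List.range (2^(n-j-1))).foldl (fun R m =>
      if blockLt n j (m * 2^(j+1)) R then elemPermVec n j (m * 2^(j+1)) R else R) Q) P

def Pplus (n : ℕ) (P : Fin (2^(n+1)) → Bool) : Fin (2^n) → Bool :=
  fun m => P ⟨2*m.val, by have := m.isLt; have h : 2^(n+1) = 2^n*2 := pow_succ 2 n; omega⟩
        || P ⟨2*m.val+1, by have := m.isLt; have h : 2^(n+1) = 2^n*2 := pow_succ 2 n; omega⟩

def Pminus (n : ℕ) (P : Fin (2^(n+1)) → Bool) : Fin (2^n) → Bool :=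
  fun m => P ⟨2*m.val, by have := m.isLt; have h : 2^(n+1) = 2^n*2 := pow_succ 2 n; omega⟩
        && P ⟨2*m.val+1, by have := m.isLt; have h : 2^(n+1) = 2^n*2 := pow_succ 2 n; omega⟩

def eraseMap : (n : ℕ) → (Fin (2^n) → Bool) → Fin (2^n) → Bool
  | 0, P => P
  | n+1, P => fun i =>
      if h : i.val < 2^n then eraseMap n (Pplus n P) ⟨i.val, h⟩
      else eraseMap n (Pminus n P)
        ⟨i.val - 2^n, by have := i.isLt; have h2 : 2^(n+1) = 2^n*2 := pow_succ 2 n; omega⟩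

def lowHalf (n : ℕ) (P : Fin (2^(n+1)) → Bool) : Fin (2^n) → Bool :=
  fun i => P ⟨i.val, by have := i.isLt; have h : 2^(n+1) = 2^n*2 := pow_succ 2 n; omega⟩

def highHalf (n : ℕ) (P : Fin (2^(n+1)) → Bool) : Fin (2^n) → Bool :=
  fun i => P ⟨2^n + i.val, by have := i.isLt; have h : 2^(n+1) = 2^n*2 := pow_succ 2 n; omega⟩

def lexLT {m : ℕ} (A B : Fin m → Bool) : Prop :=
  ∃ k, (∀ i, i < k → A i = B i) ∧ A k = false ∧ B k = true

def PatEquiv (n : ℕ) (P P' : Fin (2^n) → Bool) : Prop :=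
  ∃ L : List (ℕ × ℕ), (∀ p ∈ L, ElemValid n p.1 p.2) ∧
    P' = bitRevVec n (L.foldl (fun Q p => elemPermVec n p.1 p.2 Q) (bitRevVec n P))


lemma two_pow_div_lt {n v : ℕ} (h : v < 2^(n+1)) : v / 2^n < 2 := by
  apply Nat.div_lt_of_lt_mul
  calc v < 2^(n+1) := h
    _ = 2^n * 2 := pow_succ 2 n

lemma Gmat_succ (n : ℕ) (i j : Fin (2^(n+1))) :
    Gmat (n+1) i j = G2 ⟨i.val / 2^n, two_pow_div_lt i.isLt⟩ ⟨j.val / 2^n, two_pow_div_lt j.isLt⟩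
      * Gmat n ⟨i.val % 2^n, Nat.mod_lt _ (Nat.two_pow_pos n)⟩
               ⟨j.val % 2^n, Nat.mod_lt _ (Nat.two_pow_pos n)⟩ := rfl

lemma G2_eq (a b : Fin 2) : G2 a b = if (b = 1 → a = 1) then 1 else 0 := by
  fin_cases a <;> fin_cases b <;> simp [G2]

def gcond (n i j : ℕ) : Prop := ∀ b < n, Nat.testBit j b = true → Nat.testBit i b = true

instance (n i j : ℕ) : Decidable (gcond n i j) := by unfold gcond; infer_instance

lemma gcond_succ (n i j : ℕ) :
    gcond (n+1) i j ↔
      ((Nat.testBit j n = true → Nat.testBit i n = true) ∧ gcond n (i % 2^n) (j % 2^n)) := by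
  constructor
  · intro h
    refine ⟨h n (by omega), fun b hb hj => ?_⟩
    simp only [Nat.testBit_mod_two_pow, hb, decide_true, Bool.true_and] at hj ⊢
    exact h b (by omega) hj
  · rintro ⟨h1, h2⟩ b hb hj
    rcases Nat.lt_or_ge b n with hb' | hb'
    · have := h2 b hb' (by simp [Nat.testBit_mod_two_pow, hb', hj])
      simpa [Nat.testBit_mod_two_pow, hb'] using this
    · have hbn : b = n := by omega
      subst hbn; exact h1 hj

lemma testBit_bitRev (n j : ℕ) {b : ℕ} (hb : b < n) :
    Nat.testBit (bitRev n j) b = Nat.testBit j (n - 1 - b) := by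
  induction n generalizing j b with
  | zero => omega
  | succ n ih =>
    simp only [bitRev]
    rcases Nat.lt_or_ge b n with h | h
    · have hr : bitRev n (j/2) < 2^n := bitRev_lt n _
      have hmod : (2^n * (j%2) + bitRev n (j/2)) % 2^n = bitRev n (j/2) := by
        rw [Nat.mul_add_mod]
        exact Nat.mod_eq_of_lt hr
      have key : ∀ x : ℕ, Nat.testBit x b = Nat.testBit (x % 2^n) b := by
        intro x; simp [Nat.testBit_mod_two_pow, h]
      rw [key, hmod, ih _ h, show n + 1 - 1 - b = (n - 1 - b) + 1 from by omega,
        Nat.testBit_add_one]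
    · have hbn : n = b := by omega
      rw [hbn,
        Nat.testBit_mul_two_pow_add_eq,
        Nat.testBit_eq_false_of_lt (bitRev_lt b _),
        show b + 1 - 1 - b = 0 from by omega]
      simp [Nat.testBit_eq_decide_div_mod_eq, Nat.mod_mod_of_dvd]

lemma gcond_bitRev (n i j : ℕ) : gcond n i (bitRev n j) ↔ gcond n (bitRev n i) j := by
  constructor <;> intro h b hb hj
  · rw [testBit_bitRev n i hb]
    refine h (n-1-b) (by omega) ?_
    rw [testBit_bitRev n j (by omega), show n-1-(n-1-b) = b from by omega]
    exact hj
  · rw [testBit_bitRev n j hb] at hj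
    have := h (n-1-b) (by omega) hj
    rw [testBit_bitRev n i (by omega), show n-1-(n-1-b) = b from by omega] at this
    exact this


lemma fin_div_eq_one_iff_testBit (n : ℕ) (x : Fin (2^(n+1))) :
    ((⟨x.val / 2^n, two_pow_div_lt x.isLt⟩ : Fin 2) = 1) ↔ Nat.testBit x.val n = true := by
  rw [Nat.testBit_eq_decide_div_mod_eq, Fin.ext_iff]
  have h2 : x.val / 2^n < 2 := two_pow_div_lt x.isLt
  simp only [Fin.val_one, decide_eq_true_eq]
  show x.val / 2^n = 1 ↔ x.val / 2^n % 2 = 1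
  generalize x.val / 2^n = a at h2 ⊢
  omega

lemma Gmat_eq (n : ℕ) (i j : Fin (2^n)) :
    Gmat n i j = if gcond n i.val j.val then 1 else 0 := by
  induction n with
  | zero =>
    have hij : i = j := by
      have h1 := i.isLt; have h2 := j.isLt
      norm_num at h1 h2
      exact Fin.ext (by omega)
    subst hij
    have hc : gcond 0 i.val i.val := fun b hb _ => absurd hb (Nat.not_lt_zero b)
    rw [if_pos hc]
    exact Matrix.one_apply_eq i
  | succ n ih =>
    have hmul : ∀ (c1 c2 : Prop) (h1 : Decidable c1) (h2 : Decidable c2),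
        (if c1 then (1 : ZMod 2) else 0) * (if c2 then 1 else 0)
          = if c1 ∧ c2 then 1 else 0 := by
      intro c1 c2 h1 h2
      split_ifs <;> simp_all
    rw [Gmat_succ, ih, G2_eq, hmul]
    refine if_congr ?_ rfl rfl
    rw [gcond_succ, fin_div_eq_one_iff_testBit n i, fin_div_eq_one_iff_testBit n j]

/-- the bit-reversal of row i of G_N is row B_N(i) of G_N:
(B_N(G_N^{(i)}))(j) = G_N^{(i)}(B_N(j)) = G_N^{(B_N(i))}(j). -/
theorem stmt5 (n : ℕ) (i j : Fin (2^n)) :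
    Gmat n i (bitRevFin n j) = Gmat n (bitRevFin n i) j := by
  rw [Gmat_eq, Gmat_eq]
  exact if_congr (gcond_bitRev n i.val j.val) rfl rfl
end

section
/- Let N = 2^n with n ≥ 1, and let P be a binary vector of length N. Write B_N(P) = (P̄_0, P̄_1) as the concatenation of its first and second halves (each of length N/2). Then P is a union of rows of G_N (or zero) if and only if B_{N/2}(P̄_0) and B_{N/2}(P̄_1) are each unions of rows of G_{N/2} (or zero) and P̄_1 ⊆ P̄_0 (entrywise). -/
def SymPat (n : ℕ) (P : Fin (2^n) → Bool) : Prop :=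
  (∀ j, P j = false) ∨ IsRowUnion n P

/-! Since `G_2^{⊗(n+1)} = G_2 ⊗ G_2^{⊗n} = G_2^{⊗n} ⊗ G_2`, one may split off the lowest bit of the
indices: `G_{2N}[i, j] = G_2[i mod 2, j mod 2] · G_N[⌊i/2⌋, ⌊j/2⌋]`. So on the even columns, row `i`
of `G_{2N}` is row `⌊i/2⌋` of `G_N`, and on the odd columns it is the same row if `i` is odd and zero
otherwise. Hence the even and odd parts of a union of rows are unions of rows (or zero), the odd part
inside the even one; conversely, rows `2b` and `2b + 1` for the rows `b` of the even and of the odd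
part rebuild the pattern. Bit reversal carries the two halves of `B_{2N}(P)` to the bit-reversed even
and odd parts of `P`. -/

theorem bitRev_succ_two_pow_mul_add {n b d : ℕ} (hb : b < 2) (hd : d < 2^n) :
    bitRev (n+1) (2^n * b + d) = 2 * bitRev n d + b := by
  induction n generalizing d with
  | zero =>
    obtain rfl : d = 0 := by omega
    interval_cases b <;> rfl
  | succ n ih =>
    have hsplit : 2^(n+1) * b + d = 2 * (2^n * b) + d := by ring
    have hlt : d / 2 < 2^n := by rw [pow_succ] at hd; omega
    have hmod : (2^(n+1) * b + d) % 2 = d % 2 := by rw [hsplit]; omega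
    have hdiv : (2^(n+1) * b + d) / 2 = 2^n * b + d / 2 := by rw [hsplit]; omega
    rw [bitRev, hmod, hdiv, ih hlt, bitRev]
    ring

theorem bitRev_bitRev {n i : ℕ} (hi : i < 2^n) : bitRev n (bitRev n i) = i := by
  induction n generalizing i with
  | zero =>
    obtain rfl : i = 0 := by simpa using hi
    rfl
  | succ n ih =>
    have hunfold : bitRev (n+1) i = 2^n * (i % 2) + bitRev n (i / 2) := rfl
    rw [hunfold, bitRev_succ_two_pow_mul_add (Nat.mod_lt _ two_pos) (bitRev_lt n _),
      ih (by rw [pow_succ] at hi; omega)]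
    omega

theorem bitRevFin_involutive (n : ℕ) : Function.Involutive (bitRevFin n) :=
  fun i => Fin.ext (bitRev_bitRev i.isLt)

theorem bitRevVec_bitRevVec (n : ℕ) (P : Fin (2^n) → Bool) :
    bitRevVec n (bitRevVec n P) = P :=
  funext fun i => congrArg P (bitRevFin_involutive n i)

theorem G2_eq_one_iff (a c : Fin 2) : G2 a c = 1 ↔ c ≤ a := by
  fin_cases a <;> fin_cases c <;> decide

theorem Gmat_succ_apply_topBit (n : ℕ) (i j : Fin (2^(n+1))) :
    Gmat (n+1) i j =
      G2 ⟨i / 2^n, Nat.div_lt_of_lt_mul (by rw [← pow_succ]; exact i.isLt)⟩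
        ⟨j / 2^n, Nat.div_lt_of_lt_mul (by rw [← pow_succ]; exact j.isLt)⟩ *
      Gmat n ⟨i % 2^n, Nat.mod_lt _ (Nat.two_pow_pos n)⟩
        ⟨j % 2^n, Nat.mod_lt _ (Nat.two_pow_pos n)⟩ := by
  simp only [Gmat, Matrix.reindex_apply, Equiv.symm_trans_apply, finCongr_symm, finCongr_apply,
    finProdFinEquiv_symm_apply, Matrix.submatrix_apply, Matrix.kroneckerMap_apply]
  rfl

section Interleaving

variable {n : ℕ}

def evenIdx (d : Fin (2^n)) : Fin (2^(n+1)) := ⟨2 * d, by rw [pow_succ]; omega⟩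

def oddIdx (d : Fin (2^n)) : Fin (2^(n+1)) := ⟨2 * d + 1, by rw [pow_succ]; omega⟩

def halfIdx (j : Fin (2^(n+1))) : Fin (2^n) :=
  ⟨j / 2, Nat.div_lt_of_lt_mul (by rw [← pow_succ']; exact j.isLt)⟩

theorem Gmat_succ_apply_lowBit (i j : Fin (2^(n+1))) :
    Gmat (n+1) i j =
      G2 ⟨i % 2, Nat.mod_lt _ two_pos⟩ ⟨j % 2, Nat.mod_lt _ two_pos⟩ *
      Gmat n (halfIdx i) (halfIdx j) := by
  induction n with
  | zero =>
    rw [Gmat_succ_apply_topBit]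
    congr 1 <;> congr 2 <;> omega
  | succ n ih =>
    have hmod (m : ℕ) : m % 2^(n+1) % 2 = m % 2 :=
      Nat.mod_mod_of_dvd m (dvd_pow_self 2 n.succ_ne_zero)
    have hdiv (m : ℕ) : m / 2^(n+1) = m / 2 / 2^n := by
      rw [pow_succ', Nat.div_div_eq_div_mul]
    have hmoddiv (m : ℕ) : m % 2^(n+1) / 2 = m / 2 % 2^n := by
      rw [pow_succ', Nat.mod_mul_right_div_self]
    rw [Gmat_succ_apply_topBit, ih, Gmat_succ_apply_topBit, mul_left_comm]
    congr 2 <;> congr 1 <;> simp only [halfIdx, hmod, hdiv, hmoddiv]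

theorem Gmat_succ_eq_one_iff (i j : Fin (2^(n+1))) :
    Gmat (n+1) i j = 1 ↔ j.val % 2 ≤ i.val % 2 ∧ Gmat n (halfIdx i) (halfIdx j) = 1 := by
  rw [Gmat_succ_apply_lowBit, mul_eq_one, G2_eq_one_iff, Fin.mk_le_mk]

@[simp] theorem halfIdx_evenIdx (d : Fin (2^n)) : halfIdx (evenIdx d) = d :=
  Fin.ext <| by simp only [halfIdx, evenIdx]; omega

@[simp] theorem halfIdx_oddIdx (d : Fin (2^n)) : halfIdx (oddIdx d) = d :=
  Fin.ext <| by simp only [halfIdx, oddIdx]; omega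

@[simp] theorem evenIdx_val_mod_two (d : Fin (2^n)) : (evenIdx d).val % 2 = 0 := by
  simp [evenIdx]

@[simp] theorem oddIdx_val_mod_two (d : Fin (2^n)) : (oddIdx d).val % 2 = 1 := by
  simp [oddIdx]

theorem Gmat_succ_evenIdx_eq_one_iff (i : Fin (2^(n+1))) (d : Fin (2^n)) :
    Gmat (n+1) i (evenIdx d) = 1 ↔ Gmat n (halfIdx i) d = 1 := by
  simp [Gmat_succ_eq_one_iff]

theorem Gmat_succ_oddIdx_eq_one_iff (i : Fin (2^(n+1))) (d : Fin (2^n)) :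
    Gmat (n+1) i (oddIdx d) = 1 ↔ i.val % 2 = 1 ∧ Gmat n (halfIdx i) d = 1 := by
  rw [Gmat_succ_eq_one_iff, oddIdx_val_mod_two, halfIdx_oddIdx]
  exact and_congr_left fun _ => by omega

theorem evenIdx_or_oddIdx (j : Fin (2^(n+1))) :
    j = evenIdx (halfIdx j) ∨ j = oddIdx (halfIdx j) := by
  simp only [Fin.ext_iff, evenIdx, oddIdx, halfIdx]
  omega

def evenPart (P : Fin (2^(n+1)) → Bool) : Fin (2^n) → Bool := P ∘ evenIdx

def oddPart (P : Fin (2^(n+1)) → Bool) : Fin (2^n) → Bool := P ∘ oddIdx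

theorem symPat_iff_exists_finset (P : Fin (2^n) → Bool) :
    SymPat n P ↔ ∃ L : Finset (Fin (2^n)), ∀ j, P j = true ↔ ∃ i ∈ L, Gmat n i j = 1 := by
  constructor
  · rintro (hP | ⟨L, -, hL⟩)
    · exact ⟨∅, by simp [hP]⟩
    · exact ⟨L, hL⟩
  · rintro ⟨L, hL⟩
    obtain rfl | hne := L.eq_empty_or_nonempty
    · exact Or.inl fun j => by simpa using hL j
    · exact Or.inr ⟨L, hne, hL⟩

theorem exists_Gmat_succ_evenIdx_eq_one_iff (L : Finset (Fin (2^(n+1)))) (d : Fin (2^n)) :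
    (∃ i ∈ L, Gmat (n+1) i (evenIdx d) = 1) ↔ ∃ b ∈ L.image halfIdx, Gmat n b d = 1 := by
  simp only [Gmat_succ_evenIdx_eq_one_iff, Finset.exists_mem_image]

theorem exists_Gmat_succ_oddIdx_eq_one_iff (L : Finset (Fin (2^(n+1)))) (d : Fin (2^n)) :
    (∃ i ∈ L, Gmat (n+1) i (oddIdx d) = 1) ↔
      ∃ b ∈ (L.filter fun i => i.val % 2 = 1).image halfIdx, Gmat n b d = 1 := by
  simp only [Gmat_succ_oddIdx_eq_one_iff, Finset.exists_mem_image, Finset.mem_filter, and_assoc]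

theorem image_halfIdx_union (A B : Finset (Fin (2^n))) :
    (A.image evenIdx ∪ B.image oddIdx).image halfIdx = A ∪ B := by
  simp [Finset.image_union, Finset.image_image, Function.comp_def]

theorem image_halfIdx_filter_odd_union (A B : Finset (Fin (2^n))) :
    ((A.image evenIdx ∪ B.image oddIdx).filter fun i => i.val % 2 = 1).image halfIdx = B := by
  simp [Finset.filter_union, Finset.filter_image, Finset.image_image, Function.comp_def]

theorem symPat_succ_iff (P : Fin (2^(n+1)) → Bool) :
    SymPat (n+1) P ↔ SymPat n (evenPart P) ∧ SymPat n (oddPart P) ∧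
      ∀ d, oddPart P d = true → evenPart P d = true := by
  simp only [symPat_iff_exists_finset]
  constructor
  · rintro ⟨L, hL⟩
    refine ⟨⟨_, fun d => (hL _).trans (exists_Gmat_succ_evenIdx_eq_one_iff L d)⟩,
      ⟨_, fun d => (hL _).trans (exists_Gmat_succ_oddIdx_eq_one_iff L d)⟩, fun d hd => ?_⟩
    obtain ⟨i, hi, hodd⟩ := (hL (oddIdx d)).1 hd
    exact (hL (evenIdx d)).2
      ⟨i, hi, (Gmat_succ_evenIdx_eq_one_iff i d).2 ((Gmat_succ_oddIdx_eq_one_iff i d).1 hodd).2⟩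
  · rintro ⟨⟨A, hA⟩, ⟨B, hB⟩, hsub⟩
    refine ⟨A.image evenIdx ∪ B.image oddIdx, fun j => ?_⟩
    obtain hj | hj := evenIdx_or_oddIdx j <;> rw [hj]
    · rw [exists_Gmat_succ_evenIdx_eq_one_iff, image_halfIdx_union]
      simp only [Finset.mem_union, or_and_right, exists_or, ← hA, ← hB]
      exact ⟨Or.inl, fun h => h.elim id (hsub _)⟩
    · rw [exists_Gmat_succ_oddIdx_eq_one_iff, image_halfIdx_filter_odd_union]
      exact hB _

end Interleaving

theorem lowHalf_bitRevVec (n : ℕ) (P : Fin (2^(n+1)) → Bool) :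
    lowHalf n (bitRevVec (n+1) P) = bitRevVec n (evenPart P) :=
  funext fun d => congrArg P <| Fin.ext <| by
    simpa [bitRevFin, evenIdx] using bitRev_succ_two_pow_mul_add (b := 0) two_pos d.isLt

theorem highHalf_bitRevVec (n : ℕ) (P : Fin (2^(n+1)) → Bool) :
    highHalf n (bitRevVec (n+1) P) = bitRevVec n (oddPart P) :=
  funext fun d => congrArg P <| Fin.ext <| by
    simpa [bitRevFin, oddIdx] using bitRev_succ_two_pow_mul_add (b := 1) one_lt_two d.isLt

/-- with B_N(P) = (P̄_0, P̄_1), P is a union of rows of G_N (or zero)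
iff B_{N/2}(P̄_0), B_{N/2}(P̄_1) are unions of rows of G_{N/2} (or zero) and P̄_1 ⊆ P̄_0. -/
theorem stmt13 (n : ℕ) (P : Fin (2^(n+1)) → Bool) :
    SymPat (n+1) P ↔
      (SymPat n (bitRevVec n (lowHalf n (bitRevVec (n+1) P))) ∧
       SymPat n (bitRevVec n (highHalf n (bitRevVec (n+1) P))) ∧
       (∀ i, highHalf n (bitRevVec (n+1) P) i = true →
             lowHalf n (bitRevVec (n+1) P) i = true)) := by
  rw [lowHalf_bitRevVec, highHalf_bitRevVec, bitRevVec_bitRevVec, bitRevVec_bitRevVec,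
    symPat_succ_iff]
  exact and_congr_right' <| and_congr_right' (bitRevFin_involutive n).surjective.forall
end
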